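/- arXiv:hep-lat/9402020 — 6 statements merged into one kernel-verified Lean document; each statement's English description precedes it below -/
import Mathlib

section
/- The function F_HT(φ) = L^{1/(L^d−1)} · exp(−(L²−1)/(2γL^d) · φ²) is a fixed point of the hierarchical renormalization group transformation F'(φ) = ∫ dμ_γ(ζ) F(ζ + βφ)^{L^d} with β = L^{1−d/2}, where dμ_γ is the one-dimensional Gaussian measure with mean 0 and variance γ > 0. -/
open Real MeasureTheory

/-!
Raising `F_HT` to the power `E = L ^ d` gives `L ^ (E / (E - 1)) * exp (-a x²)` with
`a = (L² - 1) / (2γ)`, chosen so that `1 + 2aγ = L²`. Averaging a shifted Gaussian against `μ_γ`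
(completing the square) divides the prefactor by `√(1 + 2aγ) = L` and the quadratic coefficient
by `L²`; since `β² L^d = L²`, this is exactly `F_HT` again.
-/

theorem gaussian_integral_exp_neg_mul_add_sq {γ a : ℝ} (hγ : 0 < γ) (ha : 0 < 1 + 2 * a * γ)
    (c : ℝ) :
    (2 * π * γ) ^ (-(1 : ℝ) / 2) * ∫ ζ : ℝ, exp (-ζ ^ 2 / (2 * γ)) * exp (-a * (ζ + c) ^ 2)
      = exp (-a * c ^ 2 / (1 + 2 * a * γ)) / √(1 + 2 * a * γ) := by
  set s := 1 + 2 * a * γ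
  have complete_square : ∀ ζ : ℝ, exp (-ζ ^ 2 / (2 * γ)) * exp (-a * (ζ + c) ^ 2)
      = exp (-a * c ^ 2 / s) * exp (-(s / (2 * γ)) * (ζ + 2 * a * γ * c / s) ^ 2) := by
    intro ζ
    rw [← exp_add, ← exp_add]
    congr 1
    field_simp
    ring
  have h2πγ : 0 < 2 * π * γ := by positivity
  simp_rw [complete_square]
  rw [integral_const_mul, integral_add_right_eq_self (fun ζ => exp (-(s / (2 * γ)) * ζ ^ 2)),
    integral_gaussian, show π / (s / (2 * γ)) = 2 * π * γ / s by field_simp,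
    sqrt_div h2πγ.le, neg_div, rpow_neg h2πγ.le, ← sqrt_eq_rpow]
  field_simp

theorem rpow_one_sub_half_sq_mul_rpow {L : ℝ} (hL : 0 < L) (d : ℝ) :
    (L ^ (1 - d / 2)) ^ 2 * L ^ d = L ^ 2 := by
  rw [← rpow_natCast, ← rpow_mul hL.le, ← rpow_add hL, ← rpow_natCast L 2]
  congr 1
  push_cast
  ring

theorem mul_exp_neg_mul_sq_rpow {C : ℝ} (hC : 0 ≤ C) (a x E : ℝ) :
    (C * exp (-a * x ^ 2)) ^ E = C ^ E * exp (-(a * E) * x ^ 2) := by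
  rw [mul_rpow hC (exp_pos _).le, ← exp_mul]
  ring_nf

/-- The high-temperature Boltzmannian `F_HT` is a fixed point of the hierarchical
RG transformation `F'(φ) = ∫ dμ_γ(ζ) F(ζ + βφ)^(L^d)` with `β = L^(1-d/2)`. -/
theorem stmt0 (d L γ : ℝ) (hd : 0 < d) (hL : 1 < L) (hγ : 0 < γ)
    (β : ℝ) (hβ : β = L ^ (1 - d / 2))
    (FHT : ℝ → ℝ)
    (hFHT : ∀ φ : ℝ, FHT φ =
      L ^ ((1 : ℝ) / (L ^ d - 1)) * exp (-((L ^ 2 - 1) / (2 * γ * L ^ d)) * φ ^ 2)) :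
    ∀ φ : ℝ,
      (2 * π * γ) ^ (-(1 : ℝ) / 2) *
        ∫ ζ : ℝ, exp (-ζ ^ 2 / (2 * γ)) * (FHT (ζ + β * φ)) ^ (L ^ d)
      = FHT φ := by
  intro φ
  have hL0 : 0 < L := one_pos.trans hL
  have hE : 1 < L ^ d := one_lt_rpow hL hd
  set E := L ^ d
  set a := (L ^ 2 - 1) / (2 * γ)
  have ha : 1 + 2 * a * γ = L ^ 2 := by simp only [a]; field_simp; ring
  have hFHT_pow : ∀ x, FHT x ^ E = L ^ (E / (E - 1)) * exp (-a * x ^ 2) := by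
    intro x
    have hexp : 1 / (E - 1) * E = E / (E - 1) := one_div_mul_eq_div _ _
    have hcoef : (L ^ 2 - 1) / (2 * γ * E) * E = a := by simp only [a]; field_simp
    rw [hFHT, mul_exp_neg_mul_sq_rpow (by positivity), ← rpow_mul hL0.le, hexp, hcoef]
  simp_rw [hFHT_pow, mul_left_comm (exp _) (L ^ (E / (E - 1))), integral_const_mul]
  rw [mul_left_comm, gaussian_integral_exp_neg_mul_add_sq hγ (ha ▸ by positivity), ha,
    sqrt_sq hL0.le, hFHT]
  have hβ2 : β ^ 2 * E = L ^ 2 := hβ ▸ rpow_one_sub_half_sq_mul_rpow hL0 d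
  have hprefactor : L ^ (E / (E - 1)) / L = L ^ (1 / (E - 1)) := by
    rw [← rpow_sub_one hL0.ne', div_sub_one (by linarith), sub_sub_cancel]
  have hexponent : -a * (β * φ) ^ 2 / L ^ 2 = -((L ^ 2 - 1) / (2 * γ * E)) * φ ^ 2 := by
    simp only [a]
    field_simp
    linear_combination (-(L ^ 2 - 1) * φ ^ 2) * hβ2
  rw [← hprefactor, hexponent]
  ring
end

section
/- If F(φ) = F_HT(φ)·Z(φ) where F_HT is the high temperature fixed point, then F satisfies the RG transformation F'(φ) = ∫ dμ_γ(ζ) F(ζ+βφ)^{L^d} with β = L^{1−d/2} if and only if Z satisfies a transformation of the same type, Z'(φ) = ∫ dμ_{γ'}(ζ) Z(ζ+β'φ)^{L^d}, with modified parameters β' = L^{−1−d/2} and γ' = L^{−2}γ. -/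
/-!
Write `F = c·exp(-aφ²)·Z`. In the integrand `exp(-ζ²/2γ)·F(ζ+βφ)^n` the Gaussian factors
`exp(-ζ²/2γ)·exp(-na(ζ+βφ)²)` combine, after completing the square in `ζ`, into
`exp(-(ζ+(β-β')φ)²/2γ')·exp(-naββ'φ²)` with `1/γ' = 1/γ + 2na` and `β' = βγ'/γ`; shifting
`ζ` turns the remaining integral into the RG transformation of `Z` with parameters `(γ', β')`.
For the high-temperature fixed point, `na = (L²-1)/2γ`, so `γ' = L⁻²γ`, `β' = L⁻²β`, and the
prefactor `(γ'/γ)^{1/2}·cⁿ·exp(-naββ'φ²)` reproduces `c·exp(-aφ²)` exactly.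
-/

open Real MeasureTheory

noncomputable def rgTransform (γ β : ℝ) (n : ℕ) (F : ℝ → ℝ) (φ : ℝ) : ℝ :=
  (2 * π * γ) ^ (-(1 : ℝ) / 2) * ∫ ζ : ℝ, exp (-ζ ^ 2 / (2 * γ)) * F (ζ + β * φ) ^ n

theorem sq_div_add_mul_sq_eq {γ γ' κ β β' : ℝ} (hγ : γ ≠ 0) (hγ' : γ' ≠ 0)
    (hvar : γ' * (1 + 2 * κ * γ) = γ) (hβ : β * γ' = β' * γ) (ζ φ : ℝ) :
    ζ ^ 2 / (2 * γ) + κ * (ζ + β * φ) ^ 2 =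
      (ζ + (β - β') * φ) ^ 2 / (2 * γ') + κ * β * β' * φ ^ 2 := by
  have hβ' : β' = β * γ' / γ := by field_simp; linarith
  subst hβ'
  field_simp
  linear_combination (γ * ζ ^ 2 + 2 * γ * ζ * β * φ + (γ - γ') * β ^ 2 * φ ^ 2) * hvar

theorem exp_div_mul_exp_pow_eq {γ γ' a β β' : ℝ} {n : ℕ} (hγ : γ ≠ 0) (hγ' : γ' ≠ 0)
    (hvar : γ' * (1 + 2 * (n * a) * γ) = γ) (hβ : β * γ' = β' * γ) (ζ φ : ℝ) :
    exp (-ζ ^ 2 / (2 * γ)) * exp (-a * (ζ + β * φ) ^ 2) ^ n =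
      exp (-(n * a * β * β') * φ ^ 2) * exp (-(ζ + (β - β') * φ) ^ 2 / (2 * γ')) := by
  rw [← exp_nat_mul, ← exp_add, ← exp_add]
  congr 1
  linear_combination -sq_div_add_mul_sq_eq hγ hγ' hvar hβ ζ φ

theorem rgTransform_gaussian_mul {γ γ' a β β' : ℝ} {n : ℕ} (hγ : 0 < γ) (hγ' : 0 < γ')
    (hvar : γ' * (1 + 2 * (n * a) * γ) = γ) (hβ : β * γ' = β' * γ) (c : ℝ) (Z : ℝ → ℝ)
    (φ : ℝ) :
    rgTransform γ β n (fun x => c * exp (-a * x ^ 2) * Z x) φ =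
      (γ / γ') ^ (-(1 : ℝ) / 2) * (c ^ n * exp (-(n * a * β * β') * φ ^ 2)) *
        rgTransform γ' β' n Z φ := by
  have hnorm : (2 * π * γ) ^ (-(1 : ℝ) / 2) =
      (γ / γ') ^ (-(1 : ℝ) / 2) * (2 * π * γ') ^ (-(1 : ℝ) / 2) := by
    rw [← mul_rpow (by positivity) (by positivity)]
    congr 1
    field_simp
  have hintegrand : ∀ ζ, exp (-ζ ^ 2 / (2 * γ)) * (c * exp (-a * (ζ + β * φ) ^ 2) *
      Z (ζ + β * φ)) ^ n = c ^ n * exp (-(n * a * β * β') * φ ^ 2) *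
        (exp (-(ζ + (β - β') * φ) ^ 2 / (2 * γ')) * Z (ζ + (β - β') * φ + β' * φ) ^ n) := by
    intro ζ
    rw [show ζ + (β - β') * φ + β' * φ = ζ + β * φ by ring, mul_pow, mul_pow]
    linear_combination c ^ n * Z (ζ + β * φ) ^ n *
      exp_div_mul_exp_pow_eq hγ.ne' hγ'.ne' hvar hβ ζ φ
  -- no integrability needed: both steps below also hold for the junk value `0`
  simp only [rgTransform]
  rw [hnorm, integral_congr_ae (.of_forall hintegrand), integral_const_mul,
    integral_add_right_eq_self (fun ζ => exp (-ζ ^ 2 / (2 * γ')) * Z (ζ + β' * φ) ^ n)]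
  ring

noncomputable def highTempFixedPoint (L d γ φ : ℝ) : ℝ :=
  L ^ ((1 : ℝ) / (L ^ d - 1)) * exp (-((L ^ 2 - 1) / (2 * γ * L ^ d)) * φ ^ 2)

theorem rgTransform_highTempFixedPoint_mul {L d γ : ℝ} {n : ℕ} (hL : 1 < L) (hd : 0 < d)
    (hγ : 0 < γ) (hn : (n : ℝ) = L ^ d) (Z : ℝ → ℝ) (φ : ℝ) :
    rgTransform γ (L ^ (1 - d / 2)) n (fun x => highTempFixedPoint L d γ x * Z x) φ =
      highTempFixedPoint L d γ φ * rgTransform (L ^ (-2 : ℝ) * γ) (L ^ (-1 - d / 2)) n Z φ := by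
  have hL0 : 0 < L := one_pos.trans hL
  have hLd : 1 < L ^ d := one_lt_rpow hL hd
  have hL2 : L ^ (-2 : ℝ) = (L ^ 2)⁻¹ := by rw [rpow_neg hL0.le, rpow_two]
  have hvar : L ^ (-2 : ℝ) * γ * (1 + 2 * (n * ((L ^ 2 - 1) / (2 * γ * L ^ d))) * γ) = γ := by
    rw [hL2, hn]
    field_simp
    ring
  have hβ : L ^ (1 - d / 2) * (L ^ (-2 : ℝ) * γ) = L ^ (-1 - d / 2) * γ := by
    rw [← mul_assoc, ← rpow_add hL0]
    ring_nf
  have hββ' : L ^ (1 - d / 2) * L ^ (-1 - d / 2) = (L ^ d)⁻¹ := by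
    rw [← rpow_add hL0, ← rpow_neg hL0.le]
    ring_nf
  have hnorm : (γ / (L ^ (-2 : ℝ) * γ)) ^ (-(1 : ℝ) / 2) = L⁻¹ := by
    rw [show γ / (L ^ (-2 : ℝ) * γ) = L ^ (2 : ℝ) by rw [hL2, rpow_two]; field_simp,
      ← rpow_mul hL0.le, show (2 : ℝ) * (-1 / 2) = -1 by norm_num, rpow_neg_one]
  have hconst : (L ^ ((1 : ℝ) / (L ^ d - 1))) ^ n = L ^ ((1 : ℝ) / (L ^ d - 1)) * L := by
    rw [← rpow_natCast, ← rpow_mul hL0.le, hn,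
      show 1 / (L ^ d - 1) * L ^ d = 1 / (L ^ d - 1) + 1 by
        field_simp [(sub_pos.2 hLd).ne']; ring,
      rpow_add hL0, rpow_one]
  have hexponent : n * ((L ^ 2 - 1) / (2 * γ * L ^ d)) * L ^ (1 - d / 2) * L ^ (-1 - d / 2) =
      (L ^ 2 - 1) / (2 * γ * L ^ d) := by
    rw [mul_assoc, hββ', hn]
    field_simp
  simp only [highTempFixedPoint]
  rw [rgTransform_gaussian_mul hγ (by positivity) hvar hβ, hnorm, hconst, hexponent]
  field_simp

theorem highTempFixedPoint_ne_zero {L : ℝ} (hL : 0 < L) (d γ φ : ℝ) :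
    highTempFixedPoint L d γ φ ≠ 0 := by
  unfold highTempFixedPoint
  positivity

theorem stmt2_general (d L γ : ℝ) (hd : 0 < d) (hL : 1 < L) (hγ : 0 < γ)
    (Ld : ℕ) (hLd : (Ld : ℝ) = L ^ d)
    (Z : ℝ → ℝ)
    (FHT F : ℝ → ℝ)
    (hFHT : ∀ φ : ℝ, FHT φ =
      L ^ ((1 : ℝ) / (L ^ d - 1)) * exp (-((L ^ 2 - 1) / (2 * γ * L ^ d)) * φ ^ 2))
    (hF : ∀ φ : ℝ, F φ = FHT φ * Z φ) :
    (∀ φ : ℝ, F φ = (2 * π * γ) ^ (-(1 : ℝ) / 2) *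
        ∫ ζ : ℝ, exp (-ζ ^ 2 / (2 * γ)) * (F (ζ + L ^ (1 - d / 2) * φ)) ^ Ld)
    ↔ (∀ φ : ℝ, Z φ = (2 * π * (L ^ (-2 : ℝ) * γ)) ^ (-(1 : ℝ) / 2) *
        ∫ ζ : ℝ, exp (-ζ ^ 2 / (2 * (L ^ (-2 : ℝ) * γ))) *
          (Z (ζ + L ^ (-1 - d / 2) * φ)) ^ Ld) := by
  obtain rfl : FHT = highTempFixedPoint L d γ := funext hFHT
  obtain rfl : F = fun φ => highTempFixedPoint L d γ φ * Z φ := funext hF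
  change (∀ φ, highTempFixedPoint L d γ φ * Z φ =
      rgTransform γ (L ^ (1 - d / 2)) Ld (fun x => highTempFixedPoint L d γ x * Z x) φ) ↔
    ∀ φ, Z φ = rgTransform (L ^ (-2 : ℝ) * γ) (L ^ (-1 - d / 2)) Ld Z φ
  simp only [rgTransform_highTempFixedPoint_mul hL hd hγ hLd,
    mul_right_inj' (highTempFixedPoint_ne_zero (one_pos.trans hL) _ _ _)]

/-- With `F = F_HT · Z`, the Boltzmannian `F` satisfies the hierarchical RG fixed point
equation with parameters `(γ, β = L^(1-d/2))` iff `Z` satisfies the transformation of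
the same type with modified parameters `β' = L^(-1-d/2)` and `γ' = L⁻² γ`. -/
theorem stmt2 (d L γ : ℝ) (hd : 0 < d) (hL : 1 < L) (hγ : 0 < γ)
    (Ld : ℕ) (hLd : (Ld : ℝ) = L ^ d)
    (Z : ℝ → ℝ) (hZmeas : Measurable Z)
    (FHT F : ℝ → ℝ)
    (hFHT : ∀ φ : ℝ, FHT φ =
      L ^ ((1 : ℝ) / (L ^ d - 1)) * exp (-((L ^ 2 - 1) / (2 * γ * L ^ d)) * φ ^ 2))
    (hF : ∀ φ : ℝ, F φ = FHT φ * Z φ) :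
    (∀ φ : ℝ, F φ = (2 * π * γ) ^ (-(1 : ℝ) / 2) *
        ∫ ζ : ℝ, exp (-ζ ^ 2 / (2 * γ)) * (F (ζ + L ^ (1 - d / 2) * φ)) ^ Ld)
    ↔ (∀ φ : ℝ, Z φ = (2 * π * (L ^ (-2 : ℝ) * γ)) ^ (-(1 : ℝ) / 2) *
        ∫ ζ : ℝ, exp (-ζ ^ 2 / (2 * (L ^ (-2 : ℝ) * γ))) *
          (Z (ζ + L ^ (-1 - d / 2) * φ)) ^ Ld) :=
  stmt2_general d L γ hd hL hγ Ld hLd Z FHT F hFHT hF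
end

section
/- Under the map P ↦ P', P'(φ) = ∫ dμ_{1/2}(ζ) P(ζ + β'φ)², if P(φ) = Σ_{l≥0} p_l φ^{2l}/(2^l √((2l)!)), then P'(φ) = Σ_l p'_l φ^{2l}/(2^l √((2l)!)) with p'_l = Σ_{m,n} S_l^{mn} p_m p_n, where S_l^{mn} = β'^{2l} (1/8)^{−l+m+n} (2(m+n))!/((m+n−l)! √((2l)!(2m)!(2n)!)) for 0 ≤ l ≤ m+n and S_l^{mn} = 0 otherwise. -/
/-!
Write `P(y) = ∑ₘ cₘ y^{2m}` with `cₘ = pₘ / (2^m √((2m)!))`, so that `P(ζ + a)²`, `a = β'φ`, is a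
combination of the shifted powers `(ζ + a)^{2(m+n)}`. Expanding these binomially against the weight
`e^{-ζ²}`, the odd moments vanish by symmetry and the even ones are `√π (2k)!/(4^k k!)` (integration
by parts), so
`π^{-1/2} ∫ (ζ + a)^{2M} e^{-ζ²} dζ = ∑_{l ≤ M} (2M)! a^{2l} / ((2l)! 4^{M-l} (M-l)!)`.
Multiplying by `cₘ cₙ` and renormalising the coefficient of `φ^{2l}` by `2^l √((2l)!)` gives
`S_l^{mn} pₘ pₙ`, because `2^{m+n} 4^{m+n-l} = 2^l 8^{m+n-l}`.
-/

open Real MeasureTheory Finset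

/-- The structure coefficients `S_l^{mn}` of the hierarchical RG in the
`p_l φ^{2l}/(2^l √((2l)!))` coordinates. -/
noncomputable def Scoef (β' : ℝ) (l m n : ℕ) : ℝ :=
  if l ≤ m + n then
    β' ^ (2 * l) * (1 / 8 : ℝ) ^ (m + n - l) * (Nat.factorial (2 * (m + n))) /
      ((Nat.factorial (m + n - l)) *
        Real.sqrt ((Nat.factorial (2 * l) : ℝ) * (Nat.factorial (2 * m)) *
          (Nat.factorial (2 * n))))
  else 0

lemma integrable_pow_mul_exp_neg_sq (n : ℕ) :
    Integrable fun x : ℝ => x ^ n * exp (-x ^ 2) := by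
  simpa using integrable_rpow_mul_exp_neg_mul_sq one_pos
    (neg_one_lt_zero.trans_le (Nat.cast_nonneg n))

lemma add_pow_mul_exp_neg_sq_eq_sum (K : ℕ) (a x : ℝ) :
    (x + a) ^ K * exp (-x ^ 2) =
      ∑ j ∈ range (K + 1), a ^ (K - j) * K.choose j * (x ^ j * exp (-x ^ 2)) := by
  rw [add_pow, sum_mul]
  exact sum_congr rfl fun j _ => by ring

lemma integrable_add_pow_mul_exp_neg_sq (K : ℕ) (a : ℝ) :
    Integrable fun x : ℝ => (x + a) ^ K * exp (-x ^ 2) := by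
  simp_rw [add_pow_mul_exp_neg_sq_eq_sum]
  exact integrable_finsetSum _ fun j _ => (integrable_pow_mul_exp_neg_sq j).const_mul _

lemma integral_pow_odd_mul_exp_neg_sq (k : ℕ) :
    ∫ x : ℝ, x ^ (2 * k + 1) * exp (-x ^ 2) = 0 := by
  have h := integral_neg_eq_self (fun x : ℝ => x ^ (2 * k + 1) * exp (-x ^ 2)) volume
  simp only [Odd.neg_pow ⟨k, rfl⟩, neg_sq, neg_mul, integral_neg] at h
  linarith

lemma integral_pow_add_two_mul_exp_neg_sq (n : ℕ) :
    ∫ x : ℝ, x ^ (n + 2) * exp (-x ^ 2) = (n + 1) / 2 * ∫ x : ℝ, x ^ n * exp (-x ^ 2) := by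
  have hderiv : ∀ x : ℝ, HasDerivAt (fun x => x ^ (n + 1) * exp (-x ^ 2))
      ((n + 1) * (x ^ n * exp (-x ^ 2)) - 2 * (x ^ (n + 2) * exp (-x ^ 2))) x := by
    intro x
    refine ((hasDerivAt_pow (n + 1) x).fun_mul (hasDerivAt_pow 2 x).fun_neg.exp).congr_deriv ?_
    simp only [Nat.add_sub_cancel]
    push_cast
    ring
  have hint := ((integrable_pow_mul_exp_neg_sq n).const_mul (n + 1 : ℝ)).sub
    ((integrable_pow_mul_exp_neg_sq (n + 2)).const_mul 2)
  have h := integral_eq_zero_of_hasDerivAt_of_integrable hderiv hint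
    (integrable_pow_mul_exp_neg_sq (n + 1))
  rw [integral_sub ((integrable_pow_mul_exp_neg_sq n).const_mul _)
    ((integrable_pow_mul_exp_neg_sq (n + 2)).const_mul 2), integral_const_mul,
    integral_const_mul] at h
  linarith

lemma integral_pow_even_mul_exp_neg_sq (k : ℕ) :
    ∫ x : ℝ, x ^ (2 * k) * exp (-x ^ 2) = √π * (2 * k).factorial / (4 ^ k * k.factorial) := by
  induction k with
  | zero => simpa using integral_gaussian 1
  | succ k ih =>
    rw [show 2 * (k + 1) = 2 * k + 2 by ring, integral_pow_add_two_mul_exp_neg_sq, ih,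
      Nat.factorial_succ, Nat.factorial_succ, Nat.factorial_succ]
    push_cast
    field_simp
    ring

lemma sum_range_two_mul_add_one {α : Type*} [AddCommMonoid α] (f : ℕ → α) (n : ℕ) :
    ∑ j ∈ range (2 * n + 1), f j =
      ∑ k ∈ range (n + 1), f (2 * k) + ∑ k ∈ range n, f (2 * k + 1) := by
  induction n with
  | zero => simp
  | succ n ih =>
    rw [show 2 * (n + 1) + 1 = 2 * n + 1 + 1 + 1 by ring, sum_range_succ, sum_range_succ, ih]
    simp only [sum_range_succ, show 2 * n + 1 + 1 = 2 * (n + 1) by ring]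
    abel

noncomputable def gaussianShiftCoeff (M l : ℕ) : ℝ :=
  (2 * M).factorial / ((2 * l).factorial * 4 ^ (M - l) * (M - l).factorial)

lemma integral_add_pow_even_mul_exp_neg_sq (M : ℕ) (a : ℝ) :
    ∫ x : ℝ, (x + a) ^ (2 * M) * exp (-x ^ 2) =
      √π * ∑ l ∈ range (M + 1), gaussianShiftCoeff M l * a ^ (2 * l) := by
  simp_rw [add_pow_mul_exp_neg_sq_eq_sum]
  rw [integral_finsetSum _ fun j _ => (integrable_pow_mul_exp_neg_sq j).const_mul _]
  simp only [integral_const_mul]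
  rw [sum_range_two_mul_add_one]
  simp only [integral_pow_odd_mul_exp_neg_sq, mul_zero, sum_const_zero, add_zero, mul_sum]
  rw [← sum_range_reflect]
  refine sum_congr rfl fun l hl => ?_
  have hlM : l ≤ M := Nat.lt_succ_iff.mp (mem_range.mp hl)
  have hchoose := Nat.choose_mul_factorial_mul_factorial (show 2 * (M - l) ≤ 2 * M by omega)
  rw [show 2 * M - 2 * (M - l) = 2 * l by omega] at hchoose
  rw [integral_pow_even_mul_exp_neg_sq, gaussianShiftCoeff, show M + 1 - 1 - l = M - l by omega,
    show 2 * M - 2 * (M - l) = 2 * l by omega, ← hchoose]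
  push_cast
  field_simp

lemma Scoef_eq_zero_of_lt {β' : ℝ} {l m n : ℕ} (h : m + n < l) : Scoef β' l m n = 0 :=
  if_neg (not_le.mpr h)

lemma Scoef_mul_div_eq (β' φ u v : ℝ) {l m n : ℕ} (hl : l ≤ m + n) :
    Scoef β' l m n * u * v * φ ^ (2 * l) / (2 ^ l * √((2 * l).factorial)) =
      u / (2 ^ m * √((2 * m).factorial)) * (v / (2 ^ n * √((2 * n).factorial))) *
        (gaussianShiftCoeff (m + n) l * (β' * φ) ^ (2 * l)) := by
  obtain ⟨d, hd⟩ := Nat.exists_eq_add_of_le hl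
  have hpow : (2 : ℝ) ^ m * 2 ^ n * 4 ^ d = 2 ^ l * 8 ^ d := by
    rw [← pow_add, hd, pow_add, mul_assoc, ← mul_pow]
    norm_num
  rw [Scoef, if_pos hl, gaussianShiftCoeff, hd, Nat.add_sub_cancel_left, sqrt_mul (by positivity),
    sqrt_mul (by positivity), mul_pow, one_div_pow]
  field_simp
  rw [sq_sqrt (by positivity)]
  linear_combination (β' ^ (2 * l) * u * v * φ ^ (2 * l) * (2 * l).factorial) * hpow

lemma integral_exp_neg_sq_mul_sum_sq (N : ℕ) (c : ℕ → ℝ) (a : ℝ) :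
    ∫ ζ : ℝ, exp (-ζ ^ 2) * (∑ m ∈ range (N + 1), c m * (ζ + a) ^ (2 * m)) ^ 2 =
      √π * ∑ m ∈ range (N + 1), ∑ n ∈ range (N + 1),
        c m * c n * ∑ l ∈ range (m + n + 1), gaussianShiftCoeff (m + n) l * a ^ (2 * l) := by
  have hexpand : ∀ ζ : ℝ, exp (-ζ ^ 2) * (∑ m ∈ range (N + 1), c m * (ζ + a) ^ (2 * m)) ^ 2 =
      ∑ m ∈ range (N + 1), ∑ n ∈ range (N + 1),
        c m * c n * ((ζ + a) ^ (2 * (m + n)) * exp (-ζ ^ 2)) := by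
    intro ζ
    rw [sq (∑ m ∈ range (N + 1), _), sum_mul_sum]
    simp only [mul_sum]
    exact sum_congr rfl fun m _ => sum_congr rfl fun n _ => by ring
  have hint : ∀ m n : ℕ,
      Integrable fun ζ : ℝ => c m * c n * ((ζ + a) ^ (2 * (m + n)) * exp (-ζ ^ 2)) :=
    fun m n => (integrable_add_pow_mul_exp_neg_sq _ a).const_mul _
  simp_rw [hexpand]
  rw [integral_finsetSum _ fun m _ => integrable_finsetSum _ fun n _ => hint m n, mul_sum]
  refine sum_congr rfl fun m _ => ?_
  rw [integral_finsetSum _ fun n _ => hint m n, mul_sum]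
  refine sum_congr rfl fun n _ => ?_
  rw [integral_const_mul, integral_add_pow_even_mul_exp_neg_sq]
  ring

theorem stmt3_general (β' : ℝ) (N : ℕ) (p : ℕ → ℝ) (P : ℝ → ℝ)
    (hP : ∀ φ : ℝ, P φ = ∑ l ∈ range (N + 1),
      p l * φ ^ (2 * l) / (2 ^ l * Real.sqrt (Nat.factorial (2 * l)))) :
    ∀ φ : ℝ,
      (2 * π * (1 / 2 : ℝ)) ^ (-(1 : ℝ) / 2) *
        ∫ ζ : ℝ, exp (-ζ ^ 2 / (2 * (1 / 2 : ℝ))) * (P (ζ + β' * φ)) ^ 2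
      = ∑ l ∈ range (2 * N + 1),
          (∑ m ∈ range (N + 1), ∑ n ∈ range (N + 1), Scoef β' l m n * p m * p n) *
            φ ^ (2 * l) / (2 ^ l * Real.sqrt (Nat.factorial (2 * l))) := by
  intro φ
  have hnorm : (2 * π * (1 / 2 : ℝ)) ^ (-(1 : ℝ) / 2) = (√π)⁻¹ := by
    rw [show 2 * π * (1 / 2 : ℝ) = π by ring, show -(1 : ℝ) / 2 = -(1 / 2) by ring,
      rpow_neg pi_pos.le, sqrt_eq_rpow]
  have hvar : ∀ ζ : ℝ, -ζ ^ 2 / (2 * (1 / 2 : ℝ)) = -ζ ^ 2 := fun ζ => by ring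
  have hPc : ∀ y, P y =
      ∑ m ∈ range (N + 1), p m / (2 ^ m * √((2 * m).factorial)) * y ^ (2 * m) :=
    fun y => by rw [hP]; exact sum_congr rfl fun m _ => by ring
  simp_rw [hnorm, hvar, hPc, integral_exp_neg_sq_mul_sum_sq,
    inv_mul_cancel_left₀ (sqrt_pos.2 pi_pos).ne', sum_mul, sum_div]
  rw [sum_comm (s := range (2 * N + 1))]
  refine sum_congr rfl fun m hm => ?_
  rw [sum_comm (s := range (2 * N + 1))]
  refine sum_congr rfl fun n hn => ?_
  have hmn : m + n + 1 ≤ 2 * N + 1 := by simp only [mem_range] at hm hn; omega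
  rw [mul_sum]
  symm
  refine (sum_subset (range_subset_range.2 hmn) fun l _ hl => ?_).symm.trans
    (sum_congr rfl fun l hl => Scoef_mul_div_eq β' φ (p m) (p n) ?_)
  · rw [Scoef_eq_zero_of_lt (by simpa using hl)]
    ring
  · simpa [Nat.lt_succ_iff] using hl

/-- Under `P ↦ P'`, `P'(φ) = ∫ dμ_{1/2}(ζ) P(ζ + β'φ)²`, the coefficients of
`P(φ) = Σ_l p_l φ^{2l}/(2^l √((2l)!))` transform as `p'_l = Σ_{m,n} S_l^{mn} p_m p_n`. -/
theorem stmt3 (β' : ℝ) (hβ' : 0 < β') (N : ℕ) (p : ℕ → ℝ) (P : ℝ → ℝ)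
    (hP : ∀ φ : ℝ, P φ = ∑ l ∈ range (N + 1),
      p l * φ ^ (2 * l) / (2 ^ l * Real.sqrt (Nat.factorial (2 * l)))) :
    ∀ φ : ℝ,
      (2 * π * (1 / 2 : ℝ)) ^ (-(1 : ℝ) / 2) *
        ∫ ζ : ℝ, exp (-ζ ^ 2 / (2 * (1 / 2 : ℝ))) * (P (ζ + β' * φ)) ^ 2
      = ∑ l ∈ range (2 * N + 1),
          (∑ m ∈ range (N + 1), ∑ n ∈ range (N + 1), Scoef β' l m n * p m * p n) *
            φ ^ (2 * l) / (2 ^ l * Real.sqrt (Nat.factorial (2 * l))) :=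
  stmt3_general β' N p P hP
end

section
/- The linearized RG matrix U(a) with entries U_{nl}(a) = 2β^{2l} Σ_m C_l^{mn} a_m is symmetric with respect to the weighted inner product, i.e., the matrix T with T_{nl} = (β^{2n}/(2n)!) U_{nl}(a) satisfies T_{nl} = T_{ln}; consequently all eigenvalues of U(a) are real. -/
/-!
The weighted matrix `T = D U`, `D = diag(β^{2n}/(2n)!)`, is symmetric because
`C_l^{mn}/(2n)! = (2m)!/((m+n-l)!(l+n-m)!(l+m-n)!)` is symmetric in `(l, n)`.
So `U` is self-adjoint for `⟪v, w⟫ = ∑ₙ Dₙ conj(vₙ) wₙ`: for an eigenvector `U v = μ v`,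
the real number `⟪v, U v⟫` equals `μ ⟪v, v⟫` with `⟪v, v⟫ > 0`, hence `μ` is real.
-/

open Finset

/-- The structure coefficients `C_l^{mn}` of the Wick product expansion. -/
noncomputable def Ccoef (l m n : ℕ) : ℝ :=
  if m ≤ n + l ∧ n ≤ m + l ∧ l ≤ m + n then
    (Nat.factorial (2 * m) : ℝ) * (Nat.factorial (2 * n)) /
      ((Nat.factorial (m + n - l)) * (Nat.factorial (l + n - m)) *
        (Nat.factorial (l + m - n)))
  else 0

lemma Ccoef_div_factorial_comm (l m n : ℕ) :
    Ccoef l m n / (2 * n).factorial = Ccoef n m l / (2 * l).factorial := by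
  unfold Ccoef
  by_cases h : m ≤ n + l ∧ n ≤ m + l ∧ l ≤ m + n
  · rw [if_pos h, if_pos (by omega), show n + l - m = l + n - m by omega,
      show n + m - l = m + n - l by omega, show l + m - n = m + l - n by omega]
    field_simp
  · rw [if_neg h, if_neg (by omega), zero_div, zero_div]

lemma weighted_sum_Ccoef_comm (β : ℝ) {k : ℕ} (a : Fin k → ℝ) (n l : ℕ) :
    β ^ (2 * n) / (2 * n).factorial * (2 * β ^ (2 * l) * ∑ m : Fin k, Ccoef l m n * a m) =
      β ^ (2 * l) / (2 * l).factorial * (2 * β ^ (2 * n) * ∑ m : Fin k, Ccoef n m l * a m) := by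
  simp only [mul_sum]
  refine sum_congr rfl fun m _ => ?_
  linear_combination 2 * β ^ (2 * n) * β ^ (2 * l) * a m * Ccoef_div_factorial_comm l m n

namespace Matrix

open scoped ComplexOrder

variable {ι 𝕜 : Type*} [Fintype ι] [RCLike 𝕜]

lemma IsHermitian.im_eq_zero_of_mulVec_eq_smul_mulVec {A B : Matrix ι ι 𝕜} (hA : A.IsHermitian)
    (hB : B.PosDef) {v : ι → 𝕜} (hv : v ≠ 0) {μ : 𝕜} (h : A *ᵥ v = μ • B *ᵥ v) :
    RCLike.im μ = 0 := by
  obtain ⟨r, hr, hr_eq⟩ := RCLike.pos_iff_exists_ofReal.mp (hB.dotProduct_mulVec_pos hv)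
  have hquad : star v ⬝ᵥ A *ᵥ v = μ * r := by
    rw [h, dotProduct_smul, hr_eq, smul_eq_mul]
  have him := hA.im_star_dotProduct_mulVec_self v
  rw [hquad, RCLike.im_mul_ofReal] at him
  exact (mul_eq_zero.mp him).resolve_right hr.ne'

lemma im_eq_zero_of_hasEigenvalue_of_posDef_mul_isHermitian [DecidableEq ι]
    {A B : Matrix ι ι 𝕜} (hB : B.PosDef) (hBA : (B * A).IsHermitian) {μ : 𝕜}
    (hμ : Module.End.HasEigenvalue (toLin' A) μ) : RCLike.im μ = 0 := by
  obtain ⟨v, hv⟩ := hμ.exists_hasEigenvector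
  have hAv : A *ᵥ v = μ • v := by simpa using hv.apply_eq_smul
  refine hBA.im_eq_zero_of_mulVec_eq_smul_mulVec hB hv.2 ?_
  rw [← mulVec_mulVec, hAv, mulVec_smul]

end Matrix

/-- The linearized RG matrix `U(a)` with `U_{nl} = 2β^{2l} Σ_m C_l^{mn} a_m` becomes
symmetric after the weighting `T_{nl} = (β^{2n}/(2n)!) U_{nl}`; consequently all
eigenvalues of `U(a)` are real. -/
theorem stmt6 (β : ℝ) (hβ : 0 < β) (lmax : ℕ) (a : Fin (lmax + 1) → ℝ)
    (U T : Matrix (Fin (lmax + 1)) (Fin (lmax + 1)) ℝ)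
    (hU : ∀ n l, U n l = 2 * β ^ (2 * (l : ℕ)) * ∑ m : Fin (lmax + 1), Ccoef (l : ℕ) (m : ℕ) (n : ℕ) * a m)
    (hT : ∀ n l, T n l = (β ^ (2 * (n : ℕ)) / (Nat.factorial (2 * (n : ℕ)))) * U n l) :
    (∀ n l, T n l = T l n) ∧
    (∀ μ : ℂ, Module.End.HasEigenvalue
        (Matrix.toLin' (U.map (Complex.ofReal : ℝ → ℂ))) μ → μ.im = 0) := by
  set d : Fin (lmax + 1) → ℝ := fun n => β ^ (2 * (n : ℕ)) / (2 * (n : ℕ)).factorial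
  have hTsymm : ∀ n l, T n l = T l n := fun n l => by
    rw [hT, hT, hU, hU]
    exact weighted_sum_Ccoef_comm β a n l
  have hTD : T = Matrix.diagonal d * U := by
    ext n l
    rw [hT, Matrix.diagonal_mul]
  have hDU : (Matrix.diagonal d).map (Complex.ofReal : ℝ → ℂ) * U.map Complex.ofReal =
      T.map Complex.ofReal := by
    rw [hTD]
    exact (Matrix.map_mul (f := Complex.ofRealHom)).symm
  have hT_herm : (T.map (Complex.ofReal : ℝ → ℂ)).IsHermitian :=
    (Matrix.IsHermitian.ext (A := T) fun n l => hTsymm l n).map _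
      fun x => (Complex.conj_ofReal x).symm
  open scoped ComplexOrder in
  have hD : ((Matrix.diagonal d).map (Complex.ofReal : ℝ → ℂ)).PosDef := by
    rw [Matrix.diagonal_map Complex.ofReal_zero]
    exact .diagonal fun n => Complex.zero_lt_real.mpr (by positivity)
  exact ⟨hTsymm, fun μ =>
    Matrix.im_eq_zero_of_hasEigenvalue_of_posDef_mul_isHermitian hD (hDU ▸ hT_herm)⟩
end

section
/- Let the first-order fixed point equation of the ε-expansion be derived from β^{−2l} a_l = Σ_{m,n} C_l^{mn} a_m a_n with a_l^{(0)} = δ_{l,0} and β^{−2l} = 2^{l/l*} Σ_m (β^{−2l})^{(m)} ε^m. Then the first-order coefficients satisfy a_l^{(1)} = α·δ_{l,l*} with α = 2(β^{−2l*})^{(1)} / C_{l*}^{l* l*}. -/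
/-!
Since `a^{(0)} = δ_0` and `C_l^{m0} = C_l^{0m} = δ_{ml}`, the terms `k = 0` and `k = N` of the
order-`N` equation each contribute `a_l^{(N)}`. At order one this leaves
`2^{l/l*} a_l^{(1)} = 2 a_l^{(1)}`, so `a^{(1)}` is supported at `l*`. At order two and `l = l*`
the terms `a_{l*}^{(2)}` cancel and what remains is `2 β^{(1)} α = C_{l*}^{l*l*} α²`, which
determines `α` since `α ≠ 0`.
-/

open Finset

lemma Ccoef_comm (l m n : ℕ) : Ccoef l m n = Ccoef l n m := by
  unfold Ccoef
  rw [add_comm n m]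
  split_ifs <;> first | tauto | ring

lemma Ccoef_zero_right (l m : ℕ) : Ccoef l m 0 = if m = l then 1 else 0 := by
  unfold Ccoef
  split_ifs with h hml hml
  · subst hml
    have hfac : ((m + m).factorial : ℝ) ≠ 0 := by exact_mod_cast Nat.factorial_ne_zero _
    simp [two_mul, hfac]
  · omega
  · omega
  · rfl

lemma Ccoef_zero_left (l n : ℕ) : Ccoef l 0 n = if n = l then 1 else 0 := by
  rw [Ccoef_comm, Ccoef_zero_right]

lemma Ccoef_self_pos (l : ℕ) : 0 < Ccoef l l l := by
  unfold Ccoef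
  rw [if_pos ⟨by omega, by omega, by omega⟩]
  positivity

noncomputable def wickProd (l : ℕ) (f g : ℕ → ℝ) : ℝ :=
  ∑ᶠ m, ∑ᶠ n, Ccoef l m n * f m * g n

lemma wickProd_eq_of_forall_ne {l p q : ℕ} {f g : ℕ → ℝ} (hf : ∀ m ≠ p, f m = 0)
    (hg : ∀ n ≠ q, g n = 0) : wickProd l f g = Ccoef l p q * f p * g q := by
  unfold wickProd
  rw [finsum_eq_single _ p fun m hm => by simp [hf m hm]]
  exact finsum_eq_single _ q fun n hn => by simp [hg n hn]

lemma wickProd_of_eq_single_zero_right (l : ℕ) (f : ℕ → ℝ) {g : ℕ → ℝ}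
    (hg : ∀ n, g n = if n = 0 then 1 else 0) : wickProd l f g = f l := by
  unfold wickProd
  rw [finsum_congr fun m => finsum_eq_single _ 0 fun n hn => by simp [hg n, hn]]
  rw [finsum_eq_single _ l fun m hm => by simp [Ccoef_zero_right, hm]]
  simp [Ccoef_zero_right, hg]

lemma wickProd_of_eq_single_zero_left (l : ℕ) {f : ℕ → ℝ} (g : ℕ → ℝ)
    (hf : ∀ m, f m = if m = 0 then 1 else 0) : wickProd l f g = g l := by
  unfold wickProd
  rw [finsum_eq_single _ 0 fun m hm => by simp [hf m, hm]]
  rw [finsum_eq_single _ l fun n hn => by simp [Ccoef_zero_left, hn]]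
  simp [Ccoef_zero_left, hf]

section Coefficients

variable {a b : ℕ → ℕ → ℝ} {c : ℝ} {l : ℕ}

lemma fixedPoint_order_one (hb0 : b l 0 = 1) (ha0 : ∀ n, a n 0 = if n = 0 then 1 else 0)
    (h : c * ∑ k ∈ range 2, b l (1 - k) * a l k
      = ∑ k ∈ range 2, wickProd l (fun m => a m (1 - k)) (fun n => a n k)) :
    c * (b l 1 * a l 0 + a l 1) = 2 * a l 1 := by
  simpa [sum_range_succ, hb0, wickProd_of_eq_single_zero_right _ _ ha0,
    wickProd_of_eq_single_zero_left _ _ ha0, two_mul] using h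

lemma fixedPoint_order_two (hb0 : b l 0 = 1) (ha0 : ∀ n, a n 0 = if n = 0 then 1 else 0)
    (h : c * ∑ k ∈ range 3, b l (2 - k) * a l k
      = ∑ k ∈ range 3, wickProd l (fun m => a m (2 - k)) (fun n => a n k)) :
    c * (b l 2 * a l 0 + b l 1 * a l 1 + a l 2)
      = 2 * a l 2 + wickProd l (fun m => a m 1) (fun n => a n 1) := by
  simp only [sum_range_succ, sum_range_zero, zero_add, hb0, one_mul,
    wickProd_of_eq_single_zero_right _ _ ha0, wickProd_of_eq_single_zero_left _ _ ha0] at h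
  rw [h]
  ring

end Coefficients

lemma eq_zero_of_two_rpow_div_mul_eq {l p : ℕ} {x : ℝ} (hp : p ≠ 0) (hl : l ≠ p)
    (h : (2 : ℝ) ^ ((l : ℝ) / p) * x = 2 * x) : x = 0 := by
  by_contra hx
  have hexp : (2 : ℝ) ^ ((l : ℝ) / p) = 2 ^ (1 : ℝ) := by
    rw [Real.rpow_one]
    exact mul_right_cancel₀ hx h
  rw [Real.rpow_right_inj two_pos (by norm_num), div_eq_one_iff_eq (by exact_mod_cast hp)] at hexp
  exact hl (by exact_mod_cast hexp)

theorem stmt10_general (lstar : ℕ)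
    (b : ℕ → ℕ → ℝ) (hb0 : ∀ l, b l 0 = 1) (hbzero : ∀ m, 0 < m → b 0 m = 0)
    (hbne : b lstar 1 ≠ 0)
    (a : ℕ → ℕ → ℝ)
    (ha0 : ∀ l, a l 0 = if l = 0 then 1 else 0)
    (hnt : a lstar 1 ≠ 0)
    (heq : ∀ l N : ℕ, (2 : ℝ) ^ ((l : ℝ) / lstar) * ∑ k ∈ range (N + 1), b l (N - k) * a l k
      = ∑ k ∈ range (N + 1), ∑ᶠ m, ∑ᶠ n, Ccoef l m n * a m (N - k) * a n k) :
    ∀ l, a l 1 = if l = lstar then 2 * b lstar 1 / Ccoef lstar lstar lstar else 0 := by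
  have hlstar : lstar ≠ 0 := by
    rintro rfl
    exact hbne (hbzero 1 one_pos)
  have off_diag : ∀ l, l ≠ lstar → a l 1 = 0 := by
    intro l hl
    have hsource : b l 1 * a l 0 = 0 := by
      rcases Nat.eq_zero_or_pos l with rfl | hpos
      · simp [hbzero 1 one_pos]
      · simp [ha0, hpos.ne']
    have h := fixedPoint_order_one (hb0 l) ha0 (heq l 1)
    rw [hsource, zero_add] at h
    exact eq_zero_of_two_rpow_div_mul_eq hlstar hl h
  have diag : Ccoef lstar lstar lstar * a lstar 1 = 2 * b lstar 1 := by
    have h := fixedPoint_order_two (hb0 lstar) ha0 (heq lstar 2)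
    rw [div_self (by exact_mod_cast hlstar), Real.rpow_one, ha0, if_neg hlstar,
      wickProd_eq_of_forall_ne off_diag off_diag] at h
    exact mul_right_cancel₀ hnt (by linarith)
  intro l
  split_ifs with hl
  · subst hl
    rw [← diag, mul_div_cancel_left₀ _ (Ccoef_self_pos l).ne']
  · exact off_diag l hl

/-- First order of the ε-expansion of the fixed point equation
`β^{-2l} a_l = Σ_{m,n} C_l^{mn} a_m a_n` with `a_l^{(0)} = δ_{l,0}`: the nontrivial
branch has `a_l^{(1)} = α δ_{l,l*}` with `α = 2(β^{-2l*})^{(1)}/C_{l*}^{l*l*}`. -/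
theorem stmt10 (lstar : ℕ) (hl : 2 ≤ lstar)
    (b : ℕ → ℕ → ℝ) (hb0 : ∀ l, b l 0 = 1) (hbzero : ∀ m, 0 < m → b 0 m = 0)
    (hbne : b lstar 1 ≠ 0)
    (a : ℕ → ℕ → ℝ) (hsupp : ∀ k, (Function.support (fun l => a l k)).Finite)
    (ha0 : ∀ l, a l 0 = if l = 0 then 1 else 0)
    (hnt : a lstar 1 ≠ 0)
    (heq : ∀ l N : ℕ, (2 : ℝ) ^ ((l : ℝ) / lstar) * ∑ k ∈ range (N + 1), b l (N - k) * a l k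
      = ∑ k ∈ range (N + 1), ∑ᶠ m, ∑ᶠ n, Ccoef l m n * a m (N - k) * a n k) :
    ∀ l, a l 1 = if l = lstar then 2 * b lstar 1 / Ccoef lstar lstar lstar else 0 :=
  stmt10_general lstar b hb0 hbzero hbne a ha0 hnt heq
end

section
/- With a_l^{(0)} = δ_{l,0} and the formal ε-expansion of the fixed point equation 2^{l/l*} Σ_{k=0}^N (β^{−2l})^{(N−k)} a_l^{(k)} = Σ_{k=0}^N Σ_{m,n} C_l^{mn} a_m^{(N−k)} a_n^{(k)}, for every l ≠ l* and N ≥ 1 the coefficient a_l^{(N)} is uniquely determined by a_l^{(N)} = (2^{l/l*} − 2)^{−1} Σ_{k=1}^{N−1} ( −2^{l/l*} (β^{−2l})^{(N−k)} a_l^{(k)} + Σ_{m,n} C_l^{mn} a_m^{(N−k)} a_n^{(k)} ). -/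
/-! The expansion is triangular: since `a^{(0)} = δ_0` and `C_l^{m0} = δ_{ml}`, the unknown
`a_l^{(N)}` enters the order-`N` equation only through the `k = 0` and `k = N` terms on the right
(twice) and the `k = N` term on the left (with weight `2^{l/l*}`). Collecting these gives the
factor `2^{l/l*} - 2`, which vanishes only at `l = l*`. -/

open Finset

lemma finsum_Ccoef_mul_delta_right (l : ℕ) (u : ℕ → ℝ) :
    ∑ᶠ m, ∑ᶠ n, Ccoef l m n * u m * (if n = 0 then 1 else 0) = u l := by
  have inner (m : ℕ) : ∑ᶠ n, Ccoef l m n * u m * (if n = 0 then 1 else 0) = Ccoef l m 0 * u m := by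
    rw [finsum_eq_single _ 0 fun n hn => by simp [hn]]
    simp
  simp_rw [inner, Ccoef_zero_right]
  rw [finsum_eq_single _ l fun m hm => by simp [hm]]
  simp

lemma finsum_Ccoef_mul_delta_left (l : ℕ) (v : ℕ → ℝ) :
    ∑ᶠ m, ∑ᶠ n, Ccoef l m n * (if m = 0 then 1 else 0) * v n = v l := by
  rw [finsum_eq_single _ 0 fun m hm => by simp [hm]]
  simp_rw [Ccoef_zero_left]
  rw [finsum_eq_single _ l fun n hn => by simp [hn]]
  simp

lemma two_rpow_natCast_div_ne_two {l l' : ℕ} (h : l ≠ l') : (2 : ℝ) ^ ((l : ℝ) / l') ≠ 2 := by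
  intro h2
  have hexp : (l : ℝ) / l' = 1 :=
    (Real.rpow_right_inj two_pos (by norm_num)).mp (h2.trans (Real.rpow_one 2).symm)
  have hl' : (l' : ℝ) ≠ 0 := fun h0 => by simp [h0] at hexp
  exact h (by exact_mod_cast (div_eq_one_iff_eq hl').mp hexp)

lemma sum_range_succ_eq_add_sum_Ico_add {M : Type*} [AddCommMonoid M] {N : ℕ} (hN : 1 ≤ N)
    (f : ℕ → M) : ∑ k ∈ range (N + 1), f k = f 0 + ∑ k ∈ Ico 1 N, f k + f N := by
  rw [sum_range_succ, sum_range_eq_add_Ico _ hN]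

theorem stmt11_general (lstar : ℕ)
    (b : ℕ → ℕ → ℝ) (hb0 : ∀ l, b l 0 = 1) (hbzero : ∀ m, 0 < m → b 0 m = 0)
    (a : ℕ → ℕ → ℝ)
    (ha0 : ∀ l, a l 0 = if l = 0 then 1 else 0)
    (heq : ∀ l N : ℕ, (2 : ℝ) ^ ((l : ℝ) / lstar) * ∑ k ∈ range (N + 1), b l (N - k) * a l k
      = ∑ k ∈ range (N + 1), ∑ᶠ m, ∑ᶠ n, Ccoef l m n * a m (N - k) * a n k) :
    ∀ l, l ≠ lstar → ∀ N : ℕ, 1 ≤ N →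
      a l N = ((2 : ℝ) ^ ((l : ℝ) / lstar) - 2)⁻¹ *
        ∑ k ∈ Finset.Ico 1 N,
          (-(2 : ℝ) ^ ((l : ℝ) / lstar) * b l (N - k) * a l k +
            ∑ᶠ m, ∑ᶠ n, Ccoef l m n * a m (N - k) * a n k) := by
  intro l hl N hN
  have key := heq l N
  set x : ℝ := (2 : ℝ) ^ ((l : ℝ) / lstar)
  rw [sum_range_succ_eq_add_sum_Ico_add hN, sum_range_succ_eq_add_sum_Ico_add hN] at key
  have hb_first : b l (N - 0) * a l 0 = 0 := by
    rw [Nat.sub_zero]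
    rcases Nat.eq_zero_or_pos l with rfl | hl0
    · rw [hbzero N hN, zero_mul]
    · rw [ha0, if_neg hl0.ne', mul_zero]
  have hb_last : b l (N - N) * a l N = a l N := by rw [Nat.sub_self, hb0, one_mul]
  have hc_first : ∑ᶠ m, ∑ᶠ n, Ccoef l m n * a m (N - 0) * a n 0 = a l N := by
    simp only [ha0]; exact finsum_Ccoef_mul_delta_right l (a · N)
  have hc_last : ∑ᶠ m, ∑ᶠ n, Ccoef l m n * a m (N - N) * a n N = a l N := by
    simp only [Nat.sub_self, ha0]; exact finsum_Ccoef_mul_delta_left l (a · N)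
  rw [hb_first, hb_last, hc_first, hc_last] at key
  have hx : x - 2 ≠ 0 := sub_ne_zero.mpr (two_rpow_natCast_div_ne_two hl)
  rw [eq_inv_mul_iff_mul_eq₀ hx, sum_add_distrib]
  have hfactor : ∑ k ∈ Ico 1 N, -x * b l (N - k) * a l k =
      -x * ∑ k ∈ Ico 1 N, b l (N - k) * a l k := by
    simp only [mul_sum, mul_assoc]
  rw [hfactor]
  linear_combination key

/-- Order `N` of the ε-expansion of the fixed point equation: for `l ≠ l*`, `N ≥ 1`,
the coefficient `a_l^{(N)}` is uniquely determined by the lower-order data via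
`a_l^{(N)} = (2^{l/l*}-2)⁻¹ Σ_{k=1}^{N-1}(-2^{l/l*}(β^{-2l})^{(N-k)} a_l^{(k)}
 + Σ_{m,n} C_l^{mn} a_m^{(N-k)} a_n^{(k)})`. -/
theorem stmt11 (lstar : ℕ) (hl : 2 ≤ lstar)
    (b : ℕ → ℕ → ℝ) (hb0 : ∀ l, b l 0 = 1) (hbzero : ∀ m, 0 < m → b 0 m = 0)
    (a : ℕ → ℕ → ℝ) (hsupp : ∀ k, (Function.support (fun l => a l k)).Finite)
    (ha0 : ∀ l, a l 0 = if l = 0 then 1 else 0)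
    (heq : ∀ l N : ℕ, (2 : ℝ) ^ ((l : ℝ) / lstar) * ∑ k ∈ range (N + 1), b l (N - k) * a l k
      = ∑ k ∈ range (N + 1), ∑ᶠ m, ∑ᶠ n, Ccoef l m n * a m (N - k) * a n k) :
    ∀ l, l ≠ lstar → ∀ N : ℕ, 1 ≤ N →
      a l N = ((2 : ℝ) ^ ((l : ℝ) / lstar) - 2)⁻¹ *
        ∑ k ∈ Finset.Ico 1 N,
          (-(2 : ℝ) ^ ((l : ℝ) / lstar) * b l (N - k) * a l k +
            ∑ᶠ m, ∑ᶠ n, Ccoef l m n * a m (N - k) * a n k) :=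
  stmt11_general lstar b hb0 hbzero a ha0 heq
end
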